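/- arXiv:1203.3953 — 2 statements merged into one kernel-verified Lean document; each statement's English description precedes it below -/
import Mathlib

section
/- Let P be an n×n complex orthogonal projector (P = P* = P²) of rank n_e, where n = n_b·n_e for a positive integer n_b, and suppose |P_{ij}| ≤ c·e^{−α|i−j|} for all i, j, with c > 0 and α > 0. Then for every integer m ≥ 0 the m-banded truncation P^(m) satisfies ‖P − P^(m)‖_F² / ‖P‖_F² ≤ k₀·e^{−2αm}, with k₀ = 2c²·n_b/(1 − e^{−2α}); in particular k₀ depends only on c, α and n_b, and not on n or m. -/
/-- The `m`-banded truncation `A^(m)` of a square matrix `A`: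
`[A^(m)]_{ij} = A_{ij}` if `|i-j| ≤ m` and `0` otherwise. -/
def bandTrunc {n : ℕ} (A : Matrix (Fin n) (Fin n) ℂ) (m : ℕ) : Matrix (Fin n) (Fin n) ℂ :=
  fun i j => if |(i : ℤ) - (j : ℤ)| ≤ (m : ℤ) then A i j else 0

/-! For a projector, `‖P‖_F² = tr (P Pᴴ) = tr P = rank P = n_e`. Outside the band
`|P_ij|² ≤ c² q^|i-j|` with `q = e^(-2α)`, and in a row each distance `d > m` occurs at most
twice, so a row contributes at most `2 c² q^(m+1) / (1 - q)`. Summing over the `n = n_b n_e` rows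
and dividing by `n_e` removes all dependence on `n`. -/

open Finset

theorem sum_pow_le_of_forall_le {q : ℝ} (hq0 : 0 ≤ q) (hq1 : q < 1) {t : Finset ℕ} {k : ℕ}
    (ht : ∀ d ∈ t, k ≤ d) : ∑ d ∈ t, q ^ d ≤ q ^ k / (1 - q) := by
  have hsub : t ⊆ Ico k (t.sup id + 1) := fun d hd =>
    mem_Ico.2 ⟨ht d hd, Nat.lt_succ_of_le (le_sup (f := id) hd)⟩
  exact (sum_le_sum_of_subset_of_nonneg hsub fun _ _ _ => pow_nonneg hq0 _).trans
    (geom_sum_Ico_le_of_lt_one hq0 hq1)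

theorem Int.card_filter_natAbs_sub_eq_le_two {ι : Type*} {e : ι → ℤ} (he : Function.Injective e)
    (s : Finset ι) (i : ℤ) (d : ℕ) : #{j ∈ s | (i - e j).natAbs = d} ≤ 2 := by
  classical
  refine (card_le_card_of_injOn e (t := {i - d, i + d}) ?_ he.injOn).trans card_le_two
  intro j hj
  simp only [coe_filter, Set.mem_ofPred_eq, coe_insert, coe_singleton, Set.mem_insert_iff,
    Set.mem_singleton_iff] at hj ⊢
  omega

theorem sum_pow_natAbs_sub_le {ι : Type*} {e : ι → ℤ} (he : Function.Injective e)
    {q : ℝ} (hq0 : 0 ≤ q) (hq1 : q < 1) {s : Finset ι} {i : ℤ} {m : ℕ}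
    (hs : ∀ j ∈ s, m < (i - e j).natAbs) :
    ∑ j ∈ s, q ^ (i - e j).natAbs ≤ 2 * (q ^ (m + 1) / (1 - q)) := by
  classical
  set t := s.image fun j => (i - e j).natAbs
  have ht : ∀ d ∈ t, m + 1 ≤ d := by
    simp only [t, mem_image, forall_exists_index, and_imp]
    rintro _ j hj rfl
    exact hs j hj
  calc ∑ j ∈ s, q ^ (i - e j).natAbs
      = ∑ d ∈ t, #{j ∈ s | (i - e j).natAbs = d} • q ^ d := sum_comp _ _
    _ ≤ ∑ d ∈ t, 2 * q ^ d := by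
      refine sum_le_sum fun d _ => ?_
      rw [nsmul_eq_mul]
      gcongr
      exact_mod_cast Int.card_filter_natAbs_sub_eq_le_two he s i d
    _ = 2 * ∑ d ∈ t, q ^ d := (mul_sum _ _ _).symm
    _ ≤ 2 * (q ^ (m + 1) / (1 - q)) := by gcongr; exact sum_pow_le_of_forall_le hq0 hq1 ht

namespace Matrix

variable {ι K : Type*} [Fintype ι] [DecidableEq ι]

theorem trace_eq_rank_of_isIdempotentElem [Field K] {P : Matrix ι ι K} (hP : IsIdempotentElem P) :
    P.trace = P.rank := by
  have hlin : IsIdempotentElem (toLin' P) := hP.map toLinAlgEquiv'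
  rw [← trace_toLin'_eq, (LinearMap.IsIdempotentElem.isProj_range _ hlin).trace, rank,
    toLin'_apply']

omit [DecidableEq ι] in
theorem sum_sum_norm_sq_eq_trace_mul_conjTranspose {𝕜 : Type*} [RCLike 𝕜] (A : Matrix ι ι 𝕜) :
    ((∑ i, ∑ j, ‖A i j‖ ^ 2 : ℝ) : 𝕜) = (A * Aᴴ).trace := by
  simp only [trace, diag_apply, mul_apply, conjTranspose_apply, RCLike.star_def, RCLike.mul_conj]
  push_cast
  rfl

theorem sum_sum_norm_sq_eq_rank {𝕜 : Type*} [RCLike 𝕜] {P : Matrix ι ι 𝕜} (hP : P.IsHermitian)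
    (hP2 : IsIdempotentElem P) : ∑ i, ∑ j, ‖P i j‖ ^ 2 = P.rank := by
  have h := sum_sum_norm_sq_eq_trace_mul_conjTranspose P
  rw [hP.eq, hP2.eq, trace_eq_rank_of_isIdempotentElem hP2] at h
  exact_mod_cast h

end Matrix

theorem Real.exp_neg_mul_abs_sq (α : ℝ) (x : ℤ) :
    Real.exp (-α * |(x : ℝ)|) ^ 2 = Real.exp (-2 * α) ^ x.natAbs := by
  rw [← Real.exp_nat_mul, ← Real.exp_nat_mul, Nat.cast_natAbs, Int.cast_abs]
  ring_nf

theorem sub_bandTrunc_apply {n : ℕ} (A : Matrix (Fin n) (Fin n) ℂ) (m : ℕ) (i j : Fin n) :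
    (A - bandTrunc A m) i j = if (m : ℤ) < |(i : ℤ) - j| then A i j else 0 := by
  by_cases h : (m : ℤ) < |(i : ℤ) - j|
  · simp [Matrix.sub_apply, bandTrunc, h, not_le.2 h]
  · simp [Matrix.sub_apply, bandTrunc, h, not_lt.1 h]

theorem sum_sum_norm_sq_sub_bandTrunc_le {n : ℕ} {A : Matrix (Fin n) (Fin n) ℂ} {c α : ℝ}
    (hα : 0 < α) (hdecay : ∀ i j : Fin n, ‖A i j‖ ≤ c * Real.exp (-α * |(i : ℝ) - (j : ℝ)|))
    (m : ℕ) :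
    ∑ i, ∑ j, ‖(A - bandTrunc A m) i j‖ ^ 2 ≤
      n * (2 * c ^ 2 * (Real.exp (-2 * α) ^ (m + 1) / (1 - Real.exp (-2 * α)))) := by
  set q := Real.exp (-2 * α)
  have hq1 : q < 1 := Real.exp_lt_one_iff.2 (by linarith)
  have hentry (i j : Fin n) : ‖A i j‖ ^ 2 ≤ c ^ 2 * q ^ ((i : ℤ) - j).natAbs := by
    calc ‖A i j‖ ^ 2 ≤ (c * Real.exp (-α * |(i : ℝ) - (j : ℝ)|)) ^ 2 := by
          gcongr; exact hdecay i j
      _ = c ^ 2 * q ^ ((i : ℤ) - j).natAbs := by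
          rw [mul_pow, ← Real.exp_neg_mul_abs_sq]; push_cast; rfl
  have hrow (i : Fin n) : ∑ j, ‖(A - bandTrunc A m) i j‖ ^ 2 ≤
      2 * c ^ 2 * (q ^ (m + 1) / (1 - q)) := by
    simp only [sub_bandTrunc_apply, apply_ite (‖·‖ ^ 2), norm_zero, ne_eq,
      OfNat.ofNat_ne_zero, not_false_eq_true, zero_pow, ← sum_filter]
    calc _ ≤ ∑ j ∈ univ.filter (fun j : Fin n => (m : ℤ) < |(i : ℤ) - j|),
           c ^ 2 * q ^ ((i : ℤ) - j).natAbs :=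
          sum_le_sum fun j _ => hentry i j
      _ ≤ c ^ 2 * (2 * (q ^ (m + 1) / (1 - q))) := by
          rw [← mul_sum]
          gcongr
          refine sum_pow_natAbs_sub_le (Nat.cast_injective.comp Fin.val_injective)
            (Real.exp_pos _).le hq1 fun j hj => ?_
          rw [mem_filter, Int.abs_eq_natAbs] at hj
          exact Int.ofNat_lt.1 hj.2
      _ = 2 * c ^ 2 * (q ^ (m + 1) / (1 - q)) := by ring
  calc _ ≤ ∑ _i : Fin n, 2 * c ^ 2 * (q ^ (m + 1) / (1 - q)) := sum_le_sum fun i _ => hrow i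
    _ = _ := by simp

theorem stmt_6_general (n_b n_e n : ℕ) (hn : n = n_b * n_e)
    (c α : ℝ) (hα : 0 < α)
    (P : Matrix (Fin n) (Fin n) ℂ) (hP : P.IsHermitian) (hP2 : P * P = P)
    (hrank : P.rank = n_e)
    (hdecay : ∀ i j : Fin n,
      ‖P i j‖ ≤ c * Real.exp (-α * |(i : ℝ) - (j : ℝ)|)) :
    ∀ m : ℕ,
      (∑ i : Fin n, ∑ j : Fin n, ‖(P - bandTrunc P m) i j‖ ^ 2) /
        (∑ i : Fin n, ∑ j : Fin n, ‖P i j‖ ^ 2)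
        ≤ (2 * c ^ 2 * (n_b : ℝ) / (1 - Real.exp (-2 * α))) * Real.exp (-2 * α * (m : ℝ)) := by
  intro m
  set q := Real.exp (-2 * α)
  have hq0 : 0 < q := Real.exp_pos _
  have hq1 : q < 1 := Real.exp_lt_one_iff.2 (by linarith)
  have hexp : Real.exp (-2 * α * m) = q ^ m := by rw [mul_comm, Real.exp_nat_mul]
  rw [Matrix.sum_sum_norm_sq_eq_rank hP hP2, hrank, hexp]
  refine div_le_of_le_mul₀ (Nat.cast_nonneg _)
    (mul_nonneg (div_nonneg (by positivity) (by linarith)) (by positivity)) ?_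
  calc _ ≤ n * (2 * c ^ 2 * (q ^ (m + 1) / (1 - q))) :=
        sum_sum_norm_sq_sub_bandTrunc_le hα hdecay m
    _ ≤ n * (2 * c ^ 2 * (q ^ m / (1 - q))) := by
        gcongr n * (2 * c ^ 2 * (?_ / _))
        exact pow_le_pow_of_le_one hq0.le hq1.le m.le_succ
    _ = _ := by rw [hn]; push_cast; ring

/-- Let `P` be an `n×n` orthogonal projector of rank `n_e`, `n = n_b·n_e`, with
`|P_{ij}| ≤ c·e^{−α|i−j|}`. Then for every `m ≥ 0` the `m`-banded truncation satisfies
`‖P − P^(m)‖_F²/‖P‖_F² ≤ k₀·e^{−2αm}` with `k₀ = 2c²·n_b/(1 − e^{−2α})`, a constant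
depending only on `c`, `α` and `n_b` (not on `n` or `m`). -/
theorem stmt_6 (n_b n_e n : ℕ) (hnb : 0 < n_b) (hn : n = n_b * n_e)
    (c α : ℝ) (hc : 0 < c) (hα : 0 < α)
    (P : Matrix (Fin n) (Fin n) ℂ) (hP : P.IsHermitian) (hP2 : P * P = P)
    (hrank : P.rank = n_e)
    (hdecay : ∀ i j : Fin n,
      ‖P i j‖ ≤ c * Real.exp (-α * |(i : ℝ) - (j : ℝ)|)) :
    ∀ m : ℕ,
      (∑ i : Fin n, ∑ j : Fin n, ‖(P - bandTrunc P m) i j‖ ^ 2) /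
        (∑ i : Fin n, ∑ j : Fin n, ‖P i j‖ ^ 2)
        ≤ (2 * c ^ 2 * (n_b : ℝ) / (1 - Real.exp (-2 * α))) * Real.exp (-2 * α * (m : ℝ)) :=
  stmt_6_general n_b n_e n hn c α hα P hP hP2 hrank hdecay
end

section
/- Let n = 2·n_e be even and let H_n be the n×n tridiagonal matrix with zero diagonal entries and all sub- and super-diagonal entries equal to 1/2. Let P_n be the spectral projector of H_n associated with the interval [−1,0). Then [P_n]_{ij} = 0 whenever i − j is a nonzero even integer; that is, [P_n]_{i,i+2l} = 0 for all i and all integers l ≥ 1 with i + 2l ≤ n. Equivalently, for i ≠ j with i − j even, Σ_{k=1}^{n/2} [ cos((i+j)kπ/(n+1)) − cos((i−j)kπ/(n+1)) ] = 0. -/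
/-!
Let `S = diag((-1)^i)`. Since `H_n` only has entries with `i + j` odd, `S H_n S = -H_n`, so
conjugation by `S` carries the spectral projector `P` of `H_n` for the negative reals to that
of `-H_n`, which is `1 - P` because `H_n` is invertible for even `n` (a null vector vanishes at
odd positions by the three-term recurrence started at the left end, and at even positions by the
one started at the right end). Entrywise `(-1)^(i+j) P_{ij} = δ_{ij} - P_{ij}`, which forces
`P_{ij} = 0` when `i ≠ j` and `i - j` is even.

The cosine sums are Dirichlet-kernel sums: for `α = mπ/(2N+1)` with `2N+1 ∤ m`, telescoping
`2 sin α cos 2kα = sin (2k+1)α - sin (2k-1)α` gives `∑_{k=1}^N cos 2kα = -1/2`.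
-/

/-- The `N×N` tridiagonal matrix with zero diagonal and `1/2` on the first sub- and
super-diagonals. -/
noncomputable def trid (N : ℕ) : Matrix (Fin N) (Fin N) ℂ :=
  fun p q => if |(p : ℤ) - (q : ℤ)| = 1 then (1 / 2 : ℂ) else 0

lemma trid_isHermitian (N : ℕ) : (trid N).IsHermitian := by
  ext p q
  simp only [Matrix.conjTranspose_apply, trid]
  rw [abs_sub_comm]
  split <;> simp

open Matrix Filter Finset Real

noncomputable def negIndicator (x : ℝ) : ℝ := if x < 0 then 1 else 0

lemma negIndicator_neg {x : ℝ} (hx : x ≠ 0) : negIndicator (-x) = 1 - negIndicator x := by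
  rcases hx.lt_or_gt with h | h <;> simp [negIndicator, h, h.not_gt]

lemma continuousOn_negIndicator : ContinuousOn negIndicator {0}ᶜ := by
  intro x hx
  refine ContinuousAt.continuousWithinAt ?_
  rcases (Set.mem_compl_singleton_iff.mp hx).lt_or_gt with h | h
  · refine continuousAt_const.congr (f := fun _ => (1 : ℝ)) ?_
    filter_upwards [eventually_lt_nhds h] with y hy
    simp [negIndicator, hy]
  · refine continuousAt_const.congr (f := fun _ => (0 : ℝ)) ?_
    filter_upwards [eventually_gt_nhds h] with y hy
    simp [negIndicator, hy.not_gt]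

section SpectralProjector

variable {A : Type*} [Ring A] [StarRing A] [TopologicalSpace A] [Algebra ℝ A]
  [ContinuousFunctionalCalculus ℝ A IsSelfAdjoint] [ContinuousMap.UniqueHom ℝ A]

lemma cfc_negIndicator_neg {a : A} (ha : IsSelfAdjoint a) (h0 : (0 : ℝ) ∉ spectrum ℝ a) :
    cfc negIndicator (-a) = 1 - cfc negIndicator a := by
  have hspec : spectrum ℝ a ⊆ {0}ᶜ := fun x hx => by rintro rfl; exact h0 hx
  have hcont : ContinuousOn negIndicator (spectrum ℝ a) := continuousOn_negIndicator.mono hspec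
  rw [← cfc_comp_neg _ _ ?_, ← cfc_const_one ℝ a,
    ← cfc_sub (fun _ => 1) _ _ continuousOn_const hcont]
  · exact cfc_congr fun x hx => negIndicator_neg (hspec hx)
  · exact continuousOn_negIndicator.mono (by simpa [Set.subset_def] using hspec)

lemma unitary_conj_cfc_negIndicator [IsTopologicalRing A] {a u : A} (ha : IsSelfAdjoint a)
    (h0 : (0 : ℝ) ∉ spectrum ℝ a) (hu : u ∈ unitary A) (hua : u * a * star u = -a) :
    u * cfc negIndicator a * star u = 1 - cfc negIndicator a := by
  have hspec : spectrum ℝ a ⊆ {0}ᶜ := fun x hx => by rintro rfl; exact h0 hx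
  have hmap := StarAlgHomClass.map_cfc (S := ℝ) (Unitary.conjStarAlgAut ℝ A ⟨u, hu⟩) negIndicator a
    (continuousOn_negIndicator.mono hspec)
    ((continuous_const.mul continuous_id).mul continuous_const)
  simp only [Unitary.conjStarAlgAut_apply, hua] at hmap
  rw [hmap, cfc_negIndicator_neg ha h0]

end SpectralProjector

section SignDiag

variable {R : Type*} [CommRing R] {n : ℕ}

def signDiag (R : Type*) [CommRing R] (n : ℕ) : Matrix (Fin n) (Fin n) R :=
  diagonal fun i => (-1) ^ (i : ℕ)

lemma signDiag_mul_mul_signDiag_apply (M : Matrix (Fin n) (Fin n) R) (i j : Fin n) :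
    (signDiag R n * M * signDiag R n) i j = (-1) ^ ((i : ℕ) + j) * M i j := by
  simp only [signDiag, diagonal_mul, mul_diagonal, pow_add]
  ring

lemma star_signDiag [StarRing R] : star (signDiag R n) = signDiag R n := by
  simp [signDiag, star_eq_conjTranspose, diagonal_conjTranspose, Pi.star_def]

lemma signDiag_mem_unitary [StarRing R] :
    signDiag R n ∈ unitary (Matrix (Fin n) (Fin n) R) := by
  rw [Unitary.mem_iff, star_signDiag, and_self, signDiag, diagonal_mul_diagonal, ← diagonal_one]
  simp [← pow_add, ← two_mul, pow_mul]

lemma apply_eq_zero_of_signDiag_conj_eq_one_sub [IsAddTorsionFree R]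
    {M : Matrix (Fin n) (Fin n) R} (hM : signDiag R n * M * signDiag R n = 1 - M)
    {i j : Fin n} (hij : i ≠ j) (heven : Even ((i : ℤ) - (j : ℤ))) : M i j = 0 := by
  have hij' := congr_fun (congr_fun hM i) j
  have hsum : Even ((i : ℕ) + (j : ℕ)) := by
    rw [Int.even_iff] at heven; rw [Nat.even_iff]; omega
  rw [signDiag_mul_mul_signDiag_apply, hsum.neg_one_pow, one_mul, Matrix.sub_apply,
    one_apply_ne hij, zero_sub] at hij'
  exact self_eq_neg.mp hij'

end SignDiag

lemma eq_zero_of_shift_add_shift_eq_zero {G : Type*} [AddGroup G] {n : ℕ} (hn : Even n)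
    {f : ℤ → G} (hf : ∀ j : ℤ, 0 ≤ j → j < n → f (j - 1) + f (j + 1) = 0)
    (hleft : f (-1) = 0) (hright : f n = 0) {k : ℤ} (hk0 : 0 ≤ k) (hkn : k < n) : f k = 0 := by
  have hodd : ∀ m : ℕ, 2 * m ≤ n → f (2 * m - 1) = 0 := by
    intro m
    induction m with
    | zero => intro _; simpa using hleft
    | succ m ih =>
      intro hm
      have := hf (2 * m) (by positivity) (by omega)
      rw [ih (by omega), zero_add] at this
      rw [← this]; congr 1; push_cast; ring
  have heven : ∀ m : ℕ, 2 * m ≤ n → f (n - 2 * m) = 0 := by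
    intro m
    induction m with
    | zero => intro _; simpa using hright
    | succ m ih =>
      intro hm
      have := hf (n - 2 * m - 1) (by omega) (by omega)
      rw [show (n : ℤ) - 2 * m - 1 + 1 = n - 2 * m by ring, ih (by omega), add_zero] at this
      rw [← this]; congr 1; push_cast; ring
  obtain ⟨e, he⟩ := hn
  rcases Int.emod_two_eq_zero_or_one k with hk | hk
  · convert heven (e - (k / 2).toNat) (by omega) using 2; omega
  · convert hodd ((k / 2).toNat + 1) (by omega) using 2; omega

section Tridiagonal

variable {n : ℕ}

lemma intCast_val_injective : Function.Injective (fun q : Fin n => (q : ℤ)) :=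
  Nat.cast_injective.comp Fin.val_injective

lemma sum_ite_coe_eq_extend {M : Type*} [AddCommMonoid M] (v : Fin n → M) (c : ℤ) :
    ∑ q : Fin n, (if (q : ℤ) = c then v q else 0) =
      Function.extend (fun q : Fin n => (q : ℤ)) v 0 c := by
  by_cases hc : ∃ q : Fin n, (q : ℤ) = c
  · obtain ⟨q, rfl⟩ := hc
    rw [intCast_val_injective.extend_apply]
    simp [Fin.val_inj]
  · rw [Function.extend_apply' _ _ _ hc]
    exact sum_eq_zero fun q _ => if_neg fun h => hc ⟨q, h⟩

lemma trid_mulVec_apply (v : Fin n → ℂ) (j : Fin n) :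
    (trid n *ᵥ v) j = (Function.extend (fun q : Fin n => (q : ℤ)) v 0 (j - 1) +
      Function.extend (fun q : Fin n => (q : ℤ)) v 0 (j + 1)) / 2 := by
  have hrow : ∀ q : Fin n, trid n j q * v q =
      ((if (q : ℤ) = j - 1 then v q else 0) + (if (q : ℤ) = j + 1 then v q else 0)) / 2 := by
    intro q
    simp only [trid, abs_eq zero_le_one]
    split_ifs <;> first | omega | ring
  simp only [mulVec, dotProduct, hrow, ← sum_div, sum_add_distrib, sum_ite_coe_eq_extend]

lemma isUnit_trid (hn : Even n) : IsUnit (trid n) := by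
  rw [← mulVec_injective_iff_isUnit]
  refine (injective_iff_map_eq_zero (trid n).mulVecLin).mpr ?_
  intro v hv
  set f := Function.extend (fun q : Fin n => (q : ℤ)) v 0
  have hrec : ∀ j : ℤ, 0 ≤ j → j < n → f (j - 1) + f (j + 1) = 0 := by
    intro j hj0 hjn
    have := congr_fun hv ⟨j.toNat, by omega⟩
    rw [mulVecLin_apply, trid_mulVec_apply] at this
    simpa [show ((j.toNat : ℕ) : ℤ) = j by omega] using this
  have hout : ∀ c : ℤ, (c < 0 ∨ n ≤ c) → f c = 0 := fun c hc =>
    Function.extend_apply' _ _ _ (by rintro ⟨q, rfl⟩; omega)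
  funext q
  have := eq_zero_of_shift_add_shift_eq_zero hn hrec (hout _ (by omega)) (hout _ (by omega))
    (k := q) (by omega) (by omega)
  rwa [show f q = v q from intCast_val_injective.extend_apply _ _ _] at this

lemma signDiag_conj_trid : signDiag ℂ n * trid n * star (signDiag ℂ n) = -trid n := by
  ext i j
  rw [star_signDiag, signDiag_mul_mul_signDiag_apply, neg_apply]
  simp only [trid]
  split_ifs with h
  · have hodd : Odd ((i : ℕ) + (j : ℕ)) := by
      rw [abs_eq zero_le_one] at h; rw [Nat.odd_iff]; omega
    rw [hodd.neg_one_pow]; ring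
  · simp

lemma signDiag_conj_cfc_negIndicator_trid (hn : Even n) :
    signDiag ℂ n * cfc negIndicator (trid n) * signDiag ℂ n = 1 - cfc negIndicator (trid n) := by
  simpa only [star_signDiag] using unitary_conj_cfc_negIndicator (trid_isHermitian n).isSelfAdjoint
    (spectrum.zero_notMem ℝ (isUnit_trid hn)) signDiag_mem_unitary signDiag_conj_trid

end Tridiagonal

lemma two_mul_sin_mul_sum_cos (a : ℝ) (N : ℕ) :
    2 * sin a * ∑ k ∈ Icc 1 N, cos (2 * k * a) = sin ((2 * N + 1) * a) - sin a := by
  induction N with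
  | zero => simp
  | succ N ih =>
    rw [sum_Icc_succ_top (by omega), mul_add, ih, two_mul_sin_mul_cos,
      show a - 2 * ((N + 1 : ℕ) : ℝ) * a = -((2 * N + 1) * a) by push_cast; ring, sin_neg]
    push_cast; ring_nf

lemma sum_cos_eq_neg_half (N : ℕ) (m : ℤ) (hm : ¬ (2 * N + 1 : ℤ) ∣ m) :
    ∑ k ∈ Icc 1 N, cos (2 * m * k * π / (2 * N + 1)) = -1 / 2 := by
  set a := m * π / (2 * N + 1)
  have hN : (2 * N + 1 : ℝ) ≠ 0 := by positivity
  have hsin : sin a ≠ 0 := by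
    rw [Ne, sin_eq_zero_iff]
    rintro ⟨k, hk⟩
    refine hm ⟨k, ?_⟩
    simp only [a] at hk
    rw [eq_div_iff hN] at hk
    have : ((2 * N + 1) * k : ℝ) * π = m * π := by linear_combination hk
    exact_mod_cast (mul_right_cancel₀ pi_ne_zero this).symm
  have hend : sin ((2 * N + 1) * a) = 0 := by
    rw [show (2 * N + 1) * a = m * π from mul_div_cancel₀ _ hN]
    exact sin_int_mul_pi m
  have := two_mul_sin_mul_sum_cos a N
  rw [hend, zero_sub] at this
  have hterm : ∀ k : ℕ, cos (2 * m * k * π / (2 * N + 1)) = cos (2 * k * a) := fun k => by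
    congr 1; simp only [a]; ring
  simp only [hterm]
  apply mul_left_cancel₀ (mul_ne_zero two_ne_zero hsin)
  linear_combination this

/-- Let `n = 2·n_e` be even, `H_n` the tridiagonal matrix with zero diagonal and `1/2` on
the sub- and super-diagonals, and `P_n` the spectral projector of `H_n` associated with
`[−1,0)`. Then `[P_n]_{ij} = 0` whenever `i − j` is a nonzero even integer; equivalently,
for `i ≠ j` (`1`-based) with `i − j` even,
`Σ_{k=1}^{n/2} [cos((i+j)kπ/(n+1)) − cos((i−j)kπ/(n+1))] = 0`. -/
theorem stmt_16 (n_e n : ℕ) (hn : n = 2 * n_e)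
    (P : Matrix (Fin n) (Fin n) ℂ)
    (hP : P = ((trid_isHermitian n).eigenvectorUnitary : Matrix (Fin n) (Fin n) ℂ) *
        Matrix.diagonal
          (fun k : Fin n => if (trid_isHermitian n).eigenvalues k < 0 then (1 : ℂ) else 0) *
        star ((trid_isHermitian n).eigenvectorUnitary : Matrix (Fin n) (Fin n) ℂ)) :
    (∀ i j : Fin n, i ≠ j → Even ((i : ℤ) - (j : ℤ)) → P i j = 0) ∧
    (∀ i j : ℕ, 1 ≤ i → i ≤ n → 1 ≤ j → j ≤ n → i ≠ j → Even ((i : ℤ) - (j : ℤ)) →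
      ∑ k ∈ Finset.Icc 1 n_e,
        (Real.cos (((i : ℝ) + (j : ℝ)) * (k : ℝ) * Real.pi / ((n : ℝ) + 1)) -
         Real.cos (((i : ℝ) - (j : ℝ)) * (k : ℝ) * Real.pi / ((n : ℝ) + 1))) = 0) := by
  refine ⟨fun i j hij heven => ?_, fun i j hi1 hin hj1 hjn hij heven => ?_⟩
  · have hPcfc : P = cfc negIndicator (trid n) := by
      rw [hP, (trid_isHermitian n).cfc_eq, IsHermitian.cfc, Unitary.conjStarAlgAut_apply]
      congr
      ext k
      simp [negIndicator, apply_ite]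
    rw [hPcfc]
    exact apply_eq_zero_of_signDiag_conj_eq_one_sub
      (signDiag_conj_cfc_negIndicator_trid ⟨n_e, by omega⟩) hij heven
  · obtain ⟨m, hm⟩ := heven
    have hdiff : (i : ℝ) - j = 2 * (m : ℝ) := by
      rw [two_mul]; exact_mod_cast hm
    have hsum : (i : ℝ) + j = 2 * ((m + j : ℤ) : ℝ) := by
      push_cast; linarith
    have hN : (n : ℝ) + 1 = 2 * n_e + 1 := by rw [hn]; push_cast; ring
    have hndvd : ∀ c : ℤ, c ≠ 0 → |c| ≤ n → ¬ (2 * n_e + 1 : ℤ) ∣ c := fun c hc0 hcn hdvd =>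
      hc0 (Int.eq_zero_of_abs_lt_dvd hdvd (by omega))
    rw [sum_sub_distrib, hN, hsum, hdiff, sum_cos_eq_neg_half, sum_cos_eq_neg_half, sub_self]
    · exact hndvd m (by omega) (by rw [abs_le]; omega)
    · exact hndvd (m + j) (by omega) (by rw [abs_le]; omega)
end
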